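/- Rounding up every start time of a feasible schedule on processor i to the next multiple of p/s_i (processing in the same order) yields a feasible schedule, and its makespan exceeds the original makespan by at most p/s_min, where s_min = min_i s_i. -/

import Mathlib

/-- A schedule of equal-cost tasks on related processors is feasible if start times are
nonnegative and tasks on a common processor do not overlap. -/
def Feasible {n m : ℕ} (s : Fin m → ℝ) (p : ℝ)
    (proc : Fin n → Fin m) (start : Fin n → ℝ) : Prop :=
  (∀ j, 0 ≤ start j) ∧
    ∀ j k, j ≠ k → proc j = proc k →
      start j + p / s (proc j) ≤ start k ∨ start k + p / s (proc k) ≤ start j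

/-- The makespan: maximum completion time. -/
noncomputable def makespan {n m : ℕ} (s : Fin m → ℝ) (p : ℝ)
    (proc : Fin n → Fin m) (start : Fin n → ℝ) : ℝ :=
  ⨆ j, (start j + p / s (proc j))

/-!
A task on processor `i` occupies exactly one cell of the grid `(p / s i) ℤ` once its start
time is a grid point. Rounding up moves a start time by less than one cell, and two start
times at least one cell apart stay at least one cell apart after rounding, since
`⌈x / q⌉₊ + 1 = ⌈x / q + 1⌉₊ ≤ ⌈y / q⌉₊` whenever `x + q ≤ y`. Hence the rounded schedule is
feasible and every completion time grows by at most `p / s i ≤ p / s_min`.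
-/

section CeilGrid

variable {q x y : ℝ}

lemma le_natCeil_div_mul (hq : 0 < q) (x : ℝ) : x ≤ ⌈x / q⌉₊ * q :=
  (div_le_iff₀ hq).1 (Nat.le_ceil _)

lemma natCeil_div_mul_le_add (hq : 0 < q) (hx : 0 ≤ x) : ⌈x / q⌉₊ * q ≤ x + q := by
  have hceil : (⌈x / q⌉₊ : ℝ) ≤ x / q + 1 := (Nat.ceil_lt_add_one (by positivity)).le
  calc (⌈x / q⌉₊ : ℝ) * q ≤ (x / q + 1) * q := by gcongr
    _ = x + q := by field_simp

lemma natCeil_div_mul_add_le_of_add_le (hq : 0 < q) (hx : 0 ≤ x) (hxy : x + q ≤ y) :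
    ⌈x / q⌉₊ * q + q ≤ ⌈y / q⌉₊ * q := by
  have hstep : x / q + 1 ≤ y / q := by
    rwa [le_div_iff₀ hq, add_mul, div_mul_cancel₀ _ hq.ne', one_mul]
  have hceil : ⌈x / q⌉₊ + 1 ≤ ⌈y / q⌉₊ := by
    rw [← Nat.ceil_add_one (by positivity)]
    exact Nat.ceil_le_ceil hstep
  calc (⌈x / q⌉₊ : ℝ) * q + q = ((⌈x / q⌉₊ + 1 : ℕ) : ℝ) * q := by push_cast; ring
    _ ≤ ⌈y / q⌉₊ * q := by gcongr

end CeilGrid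

section Schedule

variable {n m : ℕ} {s : Fin m → ℝ} {p : ℝ} {proc : Fin n → Fin m} {start : Fin n → ℝ}

theorem Feasible.natCeil_grid (hp : 0 < p) (hs : ∀ i, 0 < s i)
    (hfeas : Feasible s p proc start) :
    Feasible s p proc (fun j => (⌈start j * s (proc j) / p⌉₊ : ℝ) * (p / s (proc j))) := by
  obtain ⟨hnonneg, hdisjoint⟩ := hfeas
  have hq : ∀ i, 0 < p / s i := fun i => div_pos hp (hs i)
  simp_rw [← div_div_eq_mul_div]
  refine ⟨fun j => (hnonneg j).trans (le_natCeil_div_mul (hq _) _), fun j k hjk hproc => ?_⟩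
  have hjk' := hdisjoint j k hjk hproc
  dsimp only
  rw [hproc] at hjk' ⊢
  rcases hjk' with h | h
  · exact Or.inl (natCeil_div_mul_add_le_of_add_le (hq _) (hnonneg j) h)
  · exact Or.inr (natCeil_div_mul_add_le_of_add_le (hq _) (hnonneg k) h)

lemma makespan_le_makespan_add {start' : Fin n → ℝ} {c : ℝ} (hc : 0 ≤ c)
    (h : ∀ j, start' j ≤ start j + c) :
    makespan s p proc start' ≤ makespan s p proc start + c := by
  unfold makespan
  cases isEmpty_or_nonempty (Fin n) with
  | inl _ => simpa using hc
  | inr _ =>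
    refine ciSup_le fun j => ?_
    calc start' j + p / s (proc j) ≤ (start j + p / s (proc j)) + c := by linarith [h j]
      _ ≤ (⨆ j, (start j + p / s (proc j))) + c := by
        gcongr
        exact le_ciSup (Finite.bddAbove_range fun j => start j + p / s (proc j)) j

end Schedule

/-- Rounding every start time on processor i up to the next multiple of p/s_i keeps the
schedule feasible and increases the makespan by at most p/s_min. -/
theorem stmt5 (n m : ℕ) (s : Fin m → ℝ) (smin p : ℝ) (hp : 0 < p) (hsmin : 0 < smin)
    (hs : ∀ i, smin ≤ s i)
    (proc : Fin n → Fin m) (start : Fin n → ℝ)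
    (hfeas : Feasible s p proc start) :
    Feasible s p proc (fun j => (⌈start j * s (proc j) / p⌉₊ : ℝ) * (p / s (proc j))) ∧
      makespan s p proc (fun j => (⌈start j * s (proc j) / p⌉₊ : ℝ) * (p / s (proc j))) ≤
        makespan s p proc start + p / smin := by
  have hspos : ∀ i, 0 < s i := fun i => hsmin.trans_le (hs i)
  refine ⟨hfeas.natCeil_grid hp hspos, makespan_le_makespan_add (by positivity) fun j => ?_⟩
  calc (⌈start j * s (proc j) / p⌉₊ : ℝ) * (p / s (proc j))
      = ⌈start j / (p / s (proc j))⌉₊ * (p / s (proc j)) := by rw [div_div_eq_mul_div]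
    _ ≤ start j + p / s (proc j) := natCeil_div_mul_le_add (div_pos hp (hspos _)) (hfeas.1 j)
    _ ≤ start j + p / smin := by gcongr; exact hs _
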